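/- In ℂ[z1, z3, w1, w3], let H0 = −Δ·z1·w1 + Δ·z3·w3, H2 = ε·(z1·w1 + z3·w3) + 2AN·(z1·z3 + w1·w3), and H4 = A·[(1/2)·z1²·w1² − 2·z1·w1·z3·w3 + (1/2)·z3²·w3² − 2·(z1·w1 + z3·w3)·(z1·z3 + w1·w3)], where Δ, ε, A, N are real parameters. Then {H2, H0} = 0 and {H4, H0} = 0, i.e. the quadratic and quartic parts of the truncated normal form Poisson-commute with H0. -/

import Mathlib

open MvPolynomial

/-- The Poisson bracket on `ℂ[z₁, z₃, w₁, w₃]`, with variables indexed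
`z₁ = X 0`, `z₃ = X 1`, `w₁ = X 2`, `w₃ = X 3`:
`{F,G} = i[(∂F/∂w₁)(∂G/∂z₁) − (∂F/∂z₁)(∂G/∂w₁) + (∂F/∂w₃)(∂G/∂z₃) − (∂F/∂z₃)(∂G/∂w₃)]`. -/
noncomputable def pbracket (F G : MvPolynomial (Fin 4) ℂ) : MvPolynomial (Fin 4) ℂ :=
  C Complex.I *
    (pderiv 2 F * pderiv 0 G - pderiv 0 F * pderiv 2 G
      + pderiv 3 F * pderiv 1 G - pderiv 1 F * pderiv 3 G)

/-- `H₀ = −Δ z₁ w₁ + Δ z₃ w₃`. -/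
noncomputable def H0poly (Δ : ℝ) : MvPolynomial (Fin 4) ℂ :=
  C (-(Δ : ℂ)) * (X 0 * X 2) + C ((Δ : ℂ)) * (X 1 * X 3)

/-- `H₂ = ε(z₁w₁ + z₃w₃) + 2AN(z₁z₃ + w₁w₃)`. -/
noncomputable def H2poly (ε A N : ℝ) : MvPolynomial (Fin 4) ℂ :=
  C ((ε : ℂ)) * (X 0 * X 2 + X 1 * X 3)
    + C ((2 * A * N : ℝ) : ℂ) * (X 0 * X 1 + X 2 * X 3)

/-- `H₄ = A[(1/2)z₁²w₁² − 2z₁w₁z₃w₃ + (1/2)z₃²w₃² − 2(z₁w₁+z₃w₃)(z₁z₃+w₁w₃)]`. -/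
noncomputable def H4poly (A : ℝ) : MvPolynomial (Fin 4) ℂ :=
  C ((A : ℂ)) *
    (C ((1 : ℂ) / 2) * (X 0) ^ 2 * (X 2) ^ 2
      - 2 * (X 0 * X 2 * (X 1 * X 3))
      + C ((1 : ℂ) / 2) * (X 1) ^ 2 * (X 3) ^ 2
      - 2 * (X 0 * X 2 + X 1 * X 3) * (X 0 * X 1 + X 2 * X 3))

/-!
Up to the factor `iΔ`, bracketing with `H₀` is the derivation that multiplies a monomial
`z₁^a w₁^b z₃^c w₃^d` by its charge `a - b - c + d`. The charge-free monomials `z₁w₁`, `z₃w₃`,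
`z₁z₃`, `w₁w₃` therefore Poisson-commute with `H₀`, and so does every polynomial in them,
since the polynomials commuting with a fixed `H` form a subalgebra. Both `H₂` and `H₄` are
such polynomials.
-/

section Commutant

variable (F G H : MvPolynomial (Fin 4) ℂ)

theorem pbracket_add_left : pbracket (F + G) H = pbracket F H + pbracket G H := by
  simp only [pbracket, map_add]
  ring

theorem pbracket_mul_left : pbracket (F * G) H = F * pbracket G H + G * pbracket F H := by
  simp only [pbracket, Derivation.leibniz, smul_eq_mul]
  ring

theorem pbracket_C_left (c : ℂ) : pbracket (C c) H = 0 := by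
  simp [pbracket]

noncomputable def commutant : Subalgebra ℂ (MvPolynomial (Fin 4) ℂ) where
  carrier := {F | pbracket F H = 0}
  add_mem' {F G} hF hG := by simp_all [pbracket_add_left]
  mul_mem' {F G} hF hG := by simp_all [pbracket_mul_left]
  algebraMap_mem' c := pbracket_C_left H c

theorem mem_commutant : F ∈ commutant H ↔ pbracket F H = 0 := Iff.rfl

end Commutant

theorem pbracket_H0poly (F : MvPolynomial (Fin 4) ℂ) (Δ : ℝ) :
    pbracket F (H0poly Δ) = C (Complex.I * Δ) *
      (X 0 * pderiv 0 F - X 1 * pderiv 1 F - X 2 * pderiv 2 F + X 3 * pderiv 3 F) := by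
  simp only [pbracket, H0poly, map_add, Derivation.leibniz, pderiv_C, pderiv_X, Pi.single_apply,
    smul_eq_mul, Fin.reduceEq, if_true, if_false, C_mul, map_neg]
  ring

def chargeFreeQuadratics : Set (MvPolynomial (Fin 4) ℂ) :=
  {X 0 * X 2, X 1 * X 3, X 0 * X 1, X 2 * X 3}

theorem adjoin_chargeFreeQuadratics_le_commutant (Δ : ℝ) :
    Algebra.adjoin ℂ chargeFreeQuadratics ≤ commutant (H0poly Δ) := by
  rw [Algebra.adjoin_le_iff]
  rintro F (rfl | rfl | rfl | rfl) <;>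
  · rw [SetLike.mem_coe, mem_commutant, pbracket_H0poly]
    simp [Derivation.leibniz, pderiv_X, mul_comm]

section Adjoin

local notation "𝒜" => Algebra.adjoin ℂ chargeFreeQuadratics

theorem chargeFreeQuadratics_mem_adjoin :
    X 0 * X 2 ∈ 𝒜 ∧ X 1 * X 3 ∈ 𝒜 ∧ X 0 * X 1 ∈ 𝒜 ∧ X 2 * X 3 ∈ 𝒜 := by
  refine ⟨?_, ?_, ?_, ?_⟩ <;> exact Algebra.subset_adjoin (by simp [chargeFreeQuadratics])

theorem H2poly_mem_adjoin (ε A N : ℝ) : H2poly ε A N ∈ 𝒜 := by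
  obtain ⟨h02, h13, h01, h23⟩ := chargeFreeQuadratics_mem_adjoin
  exact add_mem (mul_mem (algebraMap_mem _ _) (add_mem h02 h13))
    (mul_mem (algebraMap_mem _ _) (add_mem h01 h23))

theorem H4poly_eq (A : ℝ) :
    H4poly A = C (A : ℂ) *
      (C (1 / 2) * (X 0 * X 2) ^ 2 - 2 * (X 0 * X 2 * (X 1 * X 3)) + C (1 / 2) * (X 1 * X 3) ^ 2
        - 2 * (X 0 * X 2 + X 1 * X 3) * (X 0 * X 1 + X 2 * X 3)) := by
  rw [H4poly]
  ring

theorem H4poly_mem_adjoin (A : ℝ) : H4poly A ∈ 𝒜 := by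
  obtain ⟨h02, h13, h01, h23⟩ := chargeFreeQuadratics_mem_adjoin
  have half_mem : C (1 / 2 : ℂ) ∈ 𝒜 := algebraMap_mem _ _
  have two_mem : (2 : MvPolynomial (Fin 4) ℂ) ∈ 𝒜 := ofNat_mem _ 2
  rw [H4poly_eq]
  refine mul_mem (algebraMap_mem _ _) (sub_mem (add_mem (sub_mem ?_ ?_) ?_) ?_)
  · exact mul_mem half_mem (pow_mem h02 2)
  · exact mul_mem two_mem (mul_mem h02 h13)
  · exact mul_mem half_mem (pow_mem h13 2)
  · exact mul_mem (mul_mem two_mem (add_mem h02 h13)) (add_mem h01 h23)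

end Adjoin

/-- The quadratic and quartic parts of the truncated normal form
Poisson-commute with `H₀`. -/
theorem normal_form_commutes (Δ ε A N : ℝ) :
    pbracket (H2poly ε A N) (H0poly Δ) = 0 ∧
    pbracket (H4poly A) (H0poly Δ) = 0 :=
  ⟨adjoin_chargeFreeQuadratics_le_commutant Δ (H2poly_mem_adjoin ε A N),
    adjoin_chargeFreeQuadratics_le_commutant Δ (H4poly_mem_adjoin A)⟩
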